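/- Let L and M be positive integers and a, b, x real numbers, and set ℓ = 2L, m = 2M. Then det( I_m ⊗ T_ℓ(-a,x,a) + T_m(-b,0,b) ⊗ J_ℓ ) = ∏_{s=1}^{M} ∏_{k=1}^{L} ( x^2 + 4a^2 cos^2(kπ/(2L+1)) + 4b^2 cos^2(sπ/(2M+1)) )^2. (This is the partition function of the monopole-dimer model on the two-dimensional grid graph P_ℓ □ P_m with vertex weights x and edge weights a and b in the two directions.) -/

import Mathlib

open scoped Kronecker

/-- The `k × k` tridiagonal Toeplitz matrix `T_k(-s, z, s)` with diagonal entries `z`,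
superdiagonal entries `s` and subdiagonal entries `-s`. -/
noncomputable def tridiag (k : ℕ) (s z : ℂ) : Matrix (Fin k) (Fin k) ℂ :=
  Matrix.of fun i j =>
    if (i : ℕ) = (j : ℕ) then z
    else if (i : ℕ) + 1 = (j : ℕ) then s
    else if (j : ℕ) + 1 = (i : ℕ) then -s
    else 0

/-- The `k × k` anti-diagonal matrix `J_k` with all anti-diagonal entries 1. -/
noncomputable def antidiag (k : ℕ) : Matrix (Fin k) (Fin k) ℂ :=
  Matrix.of fun i j => if (i : ℕ) + (j : ℕ) + 1 = k then 1 else 0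

/-!
Write `K_n = T_n(-1, 0, 1)`. The sine vectors `(iʲ sin(jθ_k))_j`, `θ_k = kπ/(n+1)`, are
eigenvectors of `K_n` with the pairwise distinct eigenvalues `λ_k = 2i cos θ_k`, so they form an
invertible matrix `Q_n`. Conjugating by `Q_m ⊗ I` makes the matrix block diagonal, with blocks
`x I + a K_ℓ + μ_s J_ℓ`, `μ_s = b λ_s`.

For `N = a K_ℓ + μ J_ℓ` with `ℓ` even, both `K_ℓ` and `J_ℓ` anticommute with
`diag((-1)ⁱ)`, so `det(t + N) = det(t - N)`; and `K_ℓ J_ℓ = -J_ℓ K_ℓ`, `J_ℓ² = 1` give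
`N² = a² K_ℓ² + μ²`. Hence `det(t + N)² = ∏_k (t² - a² λ_k² - μ²)`, which is the square of a
monic polynomial because `λ_{ℓ+1-k} = -λ_k`. Since `det(t + N)` is monic in `t` too, it is that
square root. The same symmetry `λ_{m+1-s} = -λ_s` pairs the blocks.
-/

open Matrix Complex Polynomial Finset

section

variable {R ι κ : Type*} [CommRing R] [Fintype ι] [DecidableEq ι] [Fintype κ] [DecidableEq κ]

theorem Matrix.det_eq_det_of_mul_eq_mul {A B P : Matrix ι ι R} (hP : IsUnit P.det)
    (h : A * P = P * B) : A.det = B.det := by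
  have h' := congrArg det h
  rw [det_mul, det_mul, mul_comm] at h'
  exact hP.mul_left_cancel h'

theorem Matrix.det_scalar_sub_of_mul_eq_mul_diagonal {M Q : Matrix ι ι R} {d : ι → R}
    (hQ : IsUnit Q.det) (h : M * Q = Q * diagonal d) (t : R) :
    (scalar ι t - M).det = ∏ i, (t - d i) := by
  refine (det_eq_det_of_mul_eq_mul hQ (B := scalar ι t - diagonal d) ?_).trans ?_
  · rw [sub_mul, h, mul_sub, (scalar_commute t (fun _ => Commute.all _ _) Q).eq]
  · rw [scalar_apply, diagonal_sub, det_diagonal]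

theorem Matrix.det_scalar_add_sq_of_anticommute {E N : Matrix ι ι R} (hE : IsUnit E.det)
    (hN : N * E = -(E * N)) (t : R) :
    (scalar ι t + N).det ^ 2 = (scalar ι (t ^ 2) - N * N).det := by
  have hsym : (scalar ι t + N).det = (scalar ι t - N).det := by
    refine det_eq_det_of_mul_eq_mul hE ?_
    rw [add_mul, hN, mul_sub, (scalar_commute t (fun _ => Commute.all _ _) E).eq, sub_eq_add_neg]
  rw [sq]
  nth_rewrite 2 [hsym]
  rw [← det_mul, ← (scalar_commute t (fun _ => Commute.all _ _) N).mul_self_sub_mul_self_eq,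
    ← map_mul, sq]

theorem Matrix.det_one_kronecker_add_kronecker_of_mul_eq_mul_diagonal {B Q : Matrix κ κ R}
    {d : κ → R} (hQ : IsUnit Q.det) (h : B * Q = Q * diagonal d) (A J : Matrix ι ι R) :
    ((1 : Matrix κ κ R) ⊗ₖ A + B ⊗ₖ J).det = ∏ s, (A + d s • J).det := by
  have hconj : ((1 : Matrix κ κ R) ⊗ₖ A + B ⊗ₖ J) * (Q ⊗ₖ 1)
      = (Q ⊗ₖ 1) * ((1 : Matrix κ κ R) ⊗ₖ A + diagonal d ⊗ₖ J) := by
    simp only [add_mul, mul_add, ← mul_kronecker_mul, h, one_mul, mul_one]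
  have hunit : IsUnit (Q ⊗ₖ (1 : Matrix ι ι R)).det := by
    rw [det_kronecker, det_one, one_pow, mul_one]; exact hQ.pow _
  rw [det_eq_det_of_mul_eq_mul hunit hconj, one_kronecker, diagonal_kronecker,
    ← coe_reindexLinearEquiv R R, ← map_add, coe_reindexLinearEquiv, det_reindex_self,
    ← blockDiagonal_add, det_blockDiagonal]
  rfl

end

theorem Matrix.isUnit_det_of_mul_eq_mul_diagonal {ι K : Type*} [Fintype ι] [DecidableEq ι]
    [Field K] {A Q : Matrix ι ι K} {d : ι → K} (hd : Function.Injective d)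
    (hQ : ∀ k, Q.col k ≠ 0) (h : A * Q = Q * diagonal d) : IsUnit Q.det := by
  rw [← isUnit_iff_isUnit_det, ← linearIndependent_cols_iff_isUnit]
  refine Module.End.eigenvectors_linearIndependent' (toLin' A) d hd _ fun k =>
    Module.End.hasEigenvector_iff.mpr ⟨Module.End.mem_eigenspace_iff.mpr ?_, hQ k⟩
  ext i
  change (A * Q) i k = d k * Q i k
  rw [h, mul_diagonal, mul_comm]

section

variable {R ι : Type*} [CommRing R] [IsDomain R] [NeZero (2 : R)] [Fintype ι] [DecidableEq ι]

theorem Polynomial.Monic.eq_of_sq_eq_sq {p q : R[X]} (hp : p.Monic) (hq : q.Monic)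
    (h : p ^ 2 = q ^ 2) : p = q := by
  refine (sq_eq_sq_iff_eq_or_eq_neg.mp h).resolve_right fun hpq => NeZero.ne (2 : R) ?_
  have hlc := congrArg Polynomial.leadingCoeff hpq
  rw [leadingCoeff_neg, hp.leadingCoeff, hq.leadingCoeff] at hlc
  linear_combination hlc

theorem Matrix.det_scalar_add_eq_eval_of_sq_eq [Infinite R] {M : Matrix ι ι R} {q : R[X]}
    (hq : q.Monic) (h : ∀ t, (scalar ι t + M).det ^ 2 = q.eval t ^ 2) (x : R) :
    (scalar ι x + M).det = q.eval x := by
  have heval (t : R) : (-M).charpoly.eval t = (scalar ι t + M).det := by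
    rw [eval_charpoly, sub_neg_eq_add]
  have hcharpoly : (-M).charpoly = q :=
    (charpoly_monic _).eq_of_sq_eq_sq hq <| Polynomial.funext fun t => by
      rw [eval_pow, eval_pow, heval, h]
  rw [← heval, hcharpoly]

end

theorem neg_one_pow_eq_neg_of_odd_add {R : Type*} [Monoid R] [HasDistribNeg R] {i j : ℕ}
    (h : Odd (i + j)) : (-1 : R) ^ j = -(-1) ^ i :=
  calc (-1 : R) ^ j = (-1) ^ (i + (i + j)) := by
        rw [← add_assoc, ← two_mul, pow_add, (even_two_mul i).neg_one_pow, one_mul]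
    _ = -(-1) ^ i := by rw [pow_add, h.neg_one_pow, mul_neg_one]

theorem Fin.prod_two_mul_eq_sq_prod_Icc {M : Type*} [CommMonoid M] (L : ℕ) (f : ℕ → M)
    (h : ∀ k ∈ Icc 1 L, f (2 * L + 1 - k) = f k) :
    ∏ i : Fin (2 * L), f (i + 1) = (∏ k ∈ Icc 1 L, f k) ^ 2 := by
  have hIcc : ∏ k ∈ Icc 1 L, f k = ∏ i ∈ range L, f (i + 1) := by
    rw [← Ico_add_one_right_eq_Icc, prod_Ico_eq_prod_range, Nat.add_sub_cancel]
    simp only [add_comm]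
  rw [Fin.prod_univ_eq_prod_range (fun i => f (i + 1)), two_mul, prod_range_add, hIcc, sq]
  congr 1
  rw [← prod_range_reflect (fun i => f (L + i + 1))]
  refine prod_congr rfl fun i hi => ?_
  rw [mem_range] at hi
  rw [show L + (L - 1 - i) + 1 = 2 * L + 1 - (i + 1) by omega]
  exact h _ (mem_Icc.2 ⟨by omega, by omega⟩)

theorem tridiag_eq_scalar_add_smul (n : ℕ) (s z : ℂ) :
    tridiag n s z = scalar (Fin n) z + s • tridiag n 1 0 := by
  ext i j
  simp only [tridiag, of_apply, Matrix.add_apply, Matrix.smul_apply, scalar_apply, diagonal_apply,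
    Fin.ext_iff, smul_eq_mul]
  split_ifs <;> first | omega | ring

theorem antidiag_eq_submatrix_one (n : ℕ) :
    antidiag n = (1 : Matrix (Fin n) (Fin n) ℂ).submatrix Fin.revPerm (Equiv.refl _) := by
  ext i j
  have := i.isLt
  have := j.isLt
  simp only [antidiag, of_apply, submatrix_apply, Equiv.refl_apply, one_apply, Fin.revPerm_apply,
    Fin.ext_iff, Fin.val_rev]
  split_ifs <;> first | rfl | omega

theorem mul_antidiag {m : Type*} (n : ℕ) (M : Matrix m (Fin n) ℂ) :
    M * antidiag n = M.submatrix id Fin.rev := by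
  rw [antidiag_eq_submatrix_one, mul_submatrix_one]
  rfl

theorem antidiag_mul {m : Type*} (n : ℕ) (M : Matrix (Fin n) m ℂ) :
    antidiag n * M = M.submatrix Fin.rev id := by
  rw [antidiag_eq_submatrix_one, one_submatrix_mul]
  rfl

theorem antidiag_mul_antidiag (n : ℕ) : antidiag n * antidiag n = 1 := by
  ext i j
  simp [antidiag_eq_submatrix_one, one_apply]

theorem tridiag_one_zero_mul_antidiag (n : ℕ) :
    tridiag n 1 0 * antidiag n = -(antidiag n * tridiag n 1 0) := by
  ext i j
  have := i.isLt
  have := j.isLt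
  rw [mul_antidiag, antidiag_mul, Matrix.neg_apply]
  simp only [submatrix_apply, id, tridiag, of_apply, Fin.val_rev]
  split_ifs <;> first | omega | norm_num

noncomputable def signMatrix (n : ℕ) : Matrix (Fin n) (Fin n) ℂ :=
  diagonal fun i => (-1) ^ (i : ℕ)

theorem signMatrix_mul_self (n : ℕ) : signMatrix n * signMatrix n = 1 := by
  rw [signMatrix, diagonal_mul_diagonal, ← diagonal_one]
  congr 1
  funext i
  rw [← mul_pow, neg_one_mul, neg_neg, one_pow]

theorem isUnit_det_signMatrix (n : ℕ) : IsUnit (signMatrix n).det :=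
  IsUnit.of_mul_eq_one _ (by rw [← det_mul, signMatrix_mul_self, det_one])

theorem mul_signMatrix_of_eq_zero_of_even {n : ℕ} {M : Matrix (Fin n) (Fin n) ℂ}
    (hM : ∀ i j : Fin n, Even ((i : ℕ) + j) → M i j = 0) :
    M * signMatrix n = -(signMatrix n * M) := by
  ext i j
  rw [signMatrix, mul_diagonal, Matrix.neg_apply, diagonal_mul]
  by_cases h : Even ((i : ℕ) + j)
  · simp [hM i j h]
  · rw [neg_one_pow_eq_neg_of_odd_add (Nat.not_even_iff_odd.mp h)]
    ring

theorem tridiag_one_zero_mul_signMatrix (n : ℕ) :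
    tridiag n 1 0 * signMatrix n = -(signMatrix n * tridiag n 1 0) :=
  mul_signMatrix_of_eq_zero_of_even fun i j hij => by
    rw [Nat.even_iff] at hij
    simp only [tridiag, of_apply]
    split_ifs <;> first | omega | rfl

theorem antidiag_mul_signMatrix {n : ℕ} (hn : Even n) :
    antidiag n * signMatrix n = -(signMatrix n * antidiag n) :=
  mul_signMatrix_of_eq_zero_of_even fun i j hij => by
    rw [Nat.even_iff] at hij hn
    simp only [antidiag, of_apply]
    split_ifs <;> first | omega | rfl

theorem tridiag_mulVec_apply {n : ℕ} (s z : ℂ) {f : ℕ → ℂ} (h₀ : f 0 = 0)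
    (hn : f (n + 1) = 0) (i : Fin n) :
    (tridiag n s z *ᵥ fun j => f (j + 1)) i = z * f (i + 1) + s * f (i + 2) - s * f i := by
  have hsplit : ∀ r : ℕ, (if (i : ℕ) = r then z else if (i : ℕ) + 1 = r then s
        else if r + 1 = i then -s else 0) * f (r + 1)
      = (if r = i then z * f (i + 1) else 0) + (if r = i + 1 then s * f (i + 2) else 0)
        - (if r = i - 1 then s * f i else 0) := by
    intro r
    -- for `i = 0` the last indicator overlaps the first, but it then contributes `s * f 0 = 0`
    have h₀' : (i : ℕ) = i - 1 → f i = 0 := fun h => by rw [show (i : ℕ) = 0 by omega, h₀]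
    split_ifs <;> subst_vars <;> first | omega | ring1 | (rw [h₀' (by omega)]; ring) |
      (rw [Nat.sub_add_cancel (by omega)]; ring)
  simp only [mulVec, dotProduct, tridiag, of_apply]
  rw [Fin.sum_univ_eq_sum_range (fun r => (if (i : ℕ) = r then z else if (i : ℕ) + 1 = r then s
        else if r + 1 = i then -s else 0) * f (r + 1)), Finset.sum_congr rfl fun r _ => hsplit r,
    sum_sub_distrib, sum_add_distrib, sum_ite_eq', sum_ite_eq', sum_ite_eq']
  have hi := i.isLt
  rw [if_pos (mem_range.2 hi), if_pos (mem_range.2 (by omega : (i : ℕ) - 1 < n))]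
  by_cases hlast : (i : ℕ) + 1 < n
  · rw [if_pos (mem_range.2 hlast)]
  · rw [if_neg (by simpa using hlast), show (i : ℕ) + 2 = n + 1 by omega, hn]
    ring

noncomputable def tridiagAngle (n k : ℕ) : ℝ := k * Real.pi / (n + 1)

noncomputable def tridiagEigenvalue (n k : ℕ) : ℂ := 2 * I * Real.cos (tridiagAngle n k)

noncomputable def sineVector (θ : ℝ) (m : ℕ) : ℂ := I ^ m * Real.sin (m * θ)

noncomputable def tridiagEigenbasis (n : ℕ) : Matrix (Fin n) (Fin n) ℂ :=
  of fun j k => sineVector (tridiagAngle n (k + 1)) (j + 1)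

theorem sineVector_zero (θ : ℝ) : sineVector θ 0 = 0 := by
  simp [sineVector]

theorem sineVector_tridiagAngle_self (n k : ℕ) : sineVector (tridiagAngle n k) (n + 1) = 0 := by
  have hn : (n : ℝ) + 1 ≠ 0 := by positivity
  have hangle : ((n + 1 : ℕ) : ℝ) * tridiagAngle n k = k * Real.pi := by
    rw [tridiagAngle]
    push_cast
    field_simp
  rw [sineVector, hangle, Real.sin_nat_mul_pi, ofReal_zero, mul_zero]

theorem sineVector_add_two (θ : ℝ) (m : ℕ) :
    sineVector θ (m + 2) - sineVector θ m = 2 * I * Real.cos θ * sineVector θ (m + 1) := by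
  have hsin : Real.sin ((m + 2 : ℕ) * θ) + Real.sin (m * θ)
      = 2 * Real.sin ((m + 1 : ℕ) * θ) * Real.cos θ := by
    have h₁ : ((m + 2 : ℕ) : ℝ) * θ = (m + 1 : ℕ) * θ + θ := by push_cast; ring
    have h₂ : (m : ℝ) * θ = (m + 1 : ℕ) * θ - θ := by push_cast; ring
    rw [h₁, h₂, Real.sin_add, Real.sin_sub]
    ring
  have hsinℂ : (Real.sin ((m + 2 : ℕ) * θ) : ℂ) + Real.sin (m * θ)
      = 2 * Real.sin ((m + 1 : ℕ) * θ) * Real.cos θ := by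
    exact_mod_cast hsin
  simp only [sineVector]
  rw [pow_succ I (m + 1), pow_succ I m]
  linear_combination (-I ^ m) * hsinℂ + (I ^ m * Real.sin ((m + 2 : ℕ) * θ)
    - 2 * I ^ m * Real.cos θ * Real.sin ((m + 1 : ℕ) * θ)) * I_sq

theorem tridiag_mul_tridiagEigenbasis (n : ℕ) (s z : ℂ) :
    tridiag n s z * tridiagEigenbasis n
      = tridiagEigenbasis n * diagonal fun k : Fin n => z + s * tridiagEigenvalue n (k + 1) := by
  ext j k
  rw [mul_diagonal]
  change (tridiag n s z *ᵥ fun j => sineVector (tridiagAngle n (k + 1)) (j + 1)) j = _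
  rw [tridiag_mulVec_apply s z (sineVector_zero _) (sineVector_tridiagAngle_self n _),
    tridiagEigenbasis, of_apply, tridiagEigenvalue]
  linear_combination s * sineVector_add_two (tridiagAngle n (k + 1)) j

theorem tridiagAngle_mem_Ioo {n k : ℕ} (hk₀ : 0 < k) (hk : k ≤ n) :
    tridiagAngle n k ∈ Set.Ioo 0 Real.pi := by
  have hkn : (k : ℝ) < n + 1 := by exact_mod_cast Nat.lt_succ_of_le hk
  have hk₀' : (0 : ℝ) < k := by exact_mod_cast hk₀
  constructor
  · unfold tridiagAngle; positivity
  · rw [tridiagAngle, div_lt_iff₀ (by positivity)]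
    nlinarith [Real.pi_pos]

theorem tridiagAngle_injective (n : ℕ) : Function.Injective (tridiagAngle n) := by
  intro k k' h
  have hn : (n : ℝ) + 1 ≠ 0 := by positivity
  simp only [tridiagAngle] at h
  field_simp at h
  exact_mod_cast h

theorem isUnit_det_tridiagEigenbasis (n : ℕ) : IsUnit (tridiagEigenbasis n).det := by
  have hangle (k : Fin n) := tridiagAngle_mem_Ioo (n := n) k.succ_pos (Nat.succ_le_of_lt k.isLt)
  refine isUnit_det_of_mul_eq_mul_diagonal (A := tridiag n 1 0)
    (d := fun k => tridiagEigenvalue n (k + 1)) ?_ ?_ ?_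
  · intro k k' h
    simp only [tridiagEigenvalue, mul_right_inj' (mul_ne_zero two_ne_zero I_ne_zero),
      ofReal_inj] at h
    have hcos := Real.injOn_cos (Set.Ioo_subset_Icc_self (hangle k))
      (Set.Ioo_subset_Icc_self (hangle k')) h
    exact Fin.ext (by simpa using tridiagAngle_injective n hcos)
  · intro k hk
    have h0 := congrFun hk ⟨0, k.pos⟩
    simp only [col_apply, tridiagEigenbasis, of_apply, sineVector, zero_add, pow_one,
      Nat.cast_one, one_mul, Pi.zero_apply, mul_eq_zero, I_ne_zero, ofReal_eq_zero, false_or] at h0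
    exact (Real.sin_pos_of_pos_of_lt_pi (hangle k).1 (hangle k).2).ne' h0
  · simpa using tridiag_mul_tridiagEigenbasis n 1 0

theorem tridiagEigenvalue_succ_sub (n : ℕ) {k : ℕ} (hk : k ≤ n + 1) :
    tridiagEigenvalue n (n + 1 - k) = -tridiagEigenvalue n k := by
  have hn : (n : ℝ) + 1 ≠ 0 := by positivity
  have hangle : tridiagAngle n (n + 1 - k) = Real.pi - tridiagAngle n k := by
    simp only [tridiagAngle, Nat.cast_sub hk]
    push_cast
    field_simp
  rw [tridiagEigenvalue, tridiagEigenvalue, hangle, Real.cos_pi_sub, ofReal_neg, mul_neg]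

theorem tridiagEigenvalue_sq (n k : ℕ) :
    tridiagEigenvalue n k ^ 2 = -4 * (Real.cos (tridiagAngle n k) : ℂ) ^ 2 := by
  rw [tridiagEigenvalue]
  linear_combination 4 * (Real.cos (tridiagAngle n k) : ℂ) ^ 2 * I_sq

theorem det_scalar_add_tridiag_add_antidiag (L : ℕ) (x a μ : ℂ) :
    (scalar (Fin (2 * L)) x + (a • tridiag (2 * L) 1 0 + μ • antidiag (2 * L))).det
      = ∏ k ∈ Icc 1 L, (x ^ 2 - (a ^ 2 * tridiagEigenvalue (2 * L) k ^ 2 + μ ^ 2)) := by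
  set N := a • tridiag (2 * L) 1 0 + μ • antidiag (2 * L)
  set ν : ℕ → ℂ := fun k => a ^ 2 * tridiagEigenvalue (2 * L) k ^ 2 + μ ^ 2
  have hNE : N * signMatrix (2 * L) = -(signMatrix (2 * L) * N) := by
    simp only [N, add_mul, mul_add, smul_mul_assoc, mul_smul_comm, tridiag_one_zero_mul_signMatrix,
      antidiag_mul_signMatrix (even_two_mul L), smul_neg, neg_add]
  have hNN : N * N * tridiagEigenbasis (2 * L)
      = tridiagEigenbasis (2 * L) * diagonal fun k : Fin (2 * L) => ν (k + 1) := by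
    have hKQ := tridiag_mul_tridiagEigenbasis (2 * L) 1 0
    simp only [zero_add, one_mul] at hKQ
    have hN_sq : N * N = a ^ 2 • (tridiag (2 * L) 1 0 * tridiag (2 * L) 1 0) + μ ^ 2 • 1 := by
      simp only [N, add_mul, mul_add, smul_mul_assoc, mul_smul_comm,
        tridiag_one_zero_mul_antidiag, antidiag_mul_antidiag, smul_neg]
      module
    rw [hN_sq, add_mul, smul_mul_assoc, mul_assoc, hKQ, ← mul_assoc, hKQ, mul_assoc,
      diagonal_mul_diagonal, smul_mul_assoc, one_mul]
    ext i j
    simp only [Matrix.add_apply, Matrix.smul_apply, mul_diagonal, ν, smul_eq_mul]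
    ring
  have hq : (∏ k ∈ Icc 1 L, (X ^ 2 - C (ν k))).Monic :=
    monic_prod_of_monic _ _ fun k _ => monic_X_pow_sub_C _ two_ne_zero
  have hsq (t : ℂ) : (scalar (Fin (2 * L)) t + N).det ^ 2
      = (∏ k ∈ Icc 1 L, (X ^ 2 - C (ν k))).eval t ^ 2 := by
    rw [det_scalar_add_sq_of_anticommute (isUnit_det_signMatrix _) hNE,
      det_scalar_sub_of_mul_eq_mul_diagonal (isUnit_det_tridiagEigenbasis _) hNN, eval_prod]
    simp only [eval_sub, eval_pow, eval_X, eval_C]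
    refine Fin.prod_two_mul_eq_sq_prod_Icc L (fun k => t ^ 2 - ν k) fun k hk => ?_
    rw [mem_Icc] at hk
    simp only [ν, tridiagEigenvalue_succ_sub _ (by omega : k ≤ 2 * L + 1), neg_sq]
  rw [det_scalar_add_eq_eval_of_sq_eq hq hsq, eval_prod]
  simp [ν]

theorem det_grid2d_general (L M : ℕ) (a b x : ℝ) :
    ((1 : Matrix (Fin (2 * M)) (Fin (2 * M)) ℂ) ⊗ₖ tridiag (2 * L) a x
        + tridiag (2 * M) b 0 ⊗ₖ antidiag (2 * L)).det =
      ∏ s ∈ Finset.Icc 1 M, ∏ k ∈ Finset.Icc 1 L,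
        (((x ^ 2 + 4 * a ^ 2 * Real.cos ((k : ℝ) * Real.pi / (2 * (L : ℝ) + 1)) ^ 2
          + 4 * b ^ 2 * Real.cos ((s : ℝ) * Real.pi / (2 * (M : ℝ) + 1)) ^ 2 : ℝ) : ℂ)) ^ 2 := by
  have hB := tridiag_mul_tridiagEigenbasis (2 * M) b 0
  simp only [zero_add] at hB
  rw [det_one_kronecker_add_kronecker_of_mul_eq_mul_diagonal (isUnit_det_tridiagEigenbasis _) hB]
  simp only [tridiag_eq_scalar_add_smul (2 * L) a x, add_assoc, det_scalar_add_tridiag_add_antidiag]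
  rw [Fin.prod_two_mul_eq_sq_prod_Icc M (fun s => ∏ k ∈ Icc 1 L, ((x : ℂ) ^ 2
      - ((a : ℂ) ^ 2 * tridiagEigenvalue (2 * L) k ^ 2 + (b * tridiagEigenvalue (2 * M) s) ^ 2)))]
  · rw [← prod_pow]
    refine prod_congr rfl fun s _ => ?_
    rw [← prod_pow]
    refine prod_congr rfl fun k _ => ?_
    rw [mul_pow, tridiagEigenvalue_sq, tridiagEigenvalue_sq, tridiagAngle, tridiagAngle]
    push_cast
    ring
  · intro s hs
    rw [mem_Icc] at hs
    simp only [tridiagEigenvalue_succ_sub _ (by omega : s ≤ 2 * M + 1), mul_neg, neg_sq]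

/-- The partition function of the monopole-dimer model on the two-dimensional grid graph
`P_{2L} □ P_{2M}` with vertex weights `x` and edge weights `a` and `b`:
`det(I_m ⊗ T_ℓ(-a,x,a) + T_m(-b,0,b) ⊗ J_ℓ) = ∏_{s=1}^{M} ∏_{k=1}^{L}
(x² + 4a² cos²(kπ/(2L+1)) + 4b² cos²(sπ/(2M+1)))²` for `ℓ = 2L`, `m = 2M`. -/
theorem det_grid2d (L M : ℕ) (hL : 0 < L) (hM : 0 < M) (a b x : ℝ) :
    ((1 : Matrix (Fin (2 * M)) (Fin (2 * M)) ℂ) ⊗ₖ tridiag (2 * L) a x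
        + tridiag (2 * M) b 0 ⊗ₖ antidiag (2 * L)).det =
      ∏ s ∈ Finset.Icc 1 M, ∏ k ∈ Finset.Icc 1 L,
        (((x ^ 2 + 4 * a ^ 2 * Real.cos ((k : ℝ) * Real.pi / (2 * (L : ℝ) + 1)) ^ 2
          + 4 * b ^ 2 * Real.cos ((s : ℝ) * Real.pi / (2 * (M : ℝ) + 1)) ^ 2 : ℝ) : ℂ)) ^ 2 :=
  det_grid2d_general L M a b x
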